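/- Let n ≥ 2 and let X : (ℝ³)ⁿ → (ℝ³)ⁿ be translation invariant (X(p₁+c,…,pₙ+c) = X(p₁,…,pₙ) for all c ∈ ℝ³) and homogeneous quadratic (X(t p) = t² X(p) for all t > 0). Let p ∈ (ℝ³)ⁿ satisfy τ(p) = p and ‖p‖ = 1, let λ > 0 and c ∈ ℝ³, and set p' := λ p + (c,…,c). Then D(π)_{p'}(Ψ(X(p'))) = D(π)_p(Ψ(X(p))), i.e. the Fréchet derivative of π at p' applied to Ψ(X(p')) equals the Fréchet derivative of π at p applied to Ψ(X(p)). -/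

import Mathlib

open scoped RealInnerProductSpace

noncomputable section

/-- Euclidean 3-space with the standard inner product. -/
abbrev E3 : Type := EuclideanSpace ℝ (Fin 3)

/-- The cross product on `ℝ³`. -/
def cross (a b : E3) : E3 :=
  WithLp.toLp 2 ![a 1 * b 2 - a 2 * b 1, a 2 * b 0 - a 0 * b 2, a 0 * b 1 - a 1 * b 0]

/-- `ν(a,b,c)` for a 3-cycle. -/
def nu3 (a b c : E3) : E3 := cross a b + cross b c + cross c a

/-- `ν(a,b,c,d)` for a 4-cycle. -/
def nu4 (a b c d : E3) : E3 := cross a b + cross b c + cross c d + cross d a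

/-- `ν(a,b,c,d,e)` for a 5-cycle. -/
def nu5 (a b c d e : E3) : E3 :=
  cross a b + cross b c + cross c d + cross d e + cross e a

/-- `ν(a,b,c,d,e,f)` for a 6-cycle. -/
def nu6 (a b c d e f : E3) : E3 :=
  cross a b + cross b c + cross c d + cross d e + cross e f + cross f a

/-- The signed volume of a tetrahedron. -/
def tvol (p₁ p₂ p₃ p₄ : E3) : ℝ :=
  (1 / 6) * ⟪cross (p₂ - p₁) (p₃ - p₁), p₄ - p₁⟫

/-- The point `(x, y, z)` of `ℝ³`. -/
def v3 (x y z : ℝ) : E3 := WithLp.toLp 2 ![x, y, z]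

/-- The translation-normalizing map `τ(p₁,…,pₙ) = (p₁ − pₙ, …, p_{n−1} − pₙ, 0)`. -/
def tauMap {n : ℕ} (p : PiLp 2 fun _ : Fin n => E3) : PiLp 2 fun _ : Fin n => E3 :=
  WithLp.toLp 2 fun i =>
    if (i : ℕ) = n - 1 then 0 else p i - p ⟨n - 1, Nat.sub_lt i.pos Nat.one_pos⟩

/-- The map `π = σ ∘ τ`, where `σ` is radial projection to the unit sphere. -/
def piMap {n : ℕ} (p : PiLp 2 fun _ : Fin n => E3) : PiLp 2 fun _ : Fin n => E3 :=
  ‖tauMap p‖⁻¹ • tauMap p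

open Classical in
/-- The normalization `Ψ(v) = v / √‖v‖` for `v ≠ 0`, `Ψ(0) = 0`. -/
def Psi {E : Type*} [NormedAddCommGroup E] [NormedSpace ℝ E] (v : E) : E :=
  if v = 0 then 0 else (Real.sqrt ‖v‖)⁻¹ • v

/-!
`π = σ ∘ τ` is invariant under translations (`τ` kills them) and under positive scalings, so
its derivative is unchanged by translating the base point and is multiplied by `λ⁻¹` when the
base point is scaled by `λ`. Both facts hold for `fderiv` unconditionally, since precomposing
with a translation or a scaling is exact for `fderiv` even where `π` is not differentiable.
On the other side `X p' = λ² X p`, so `Ψ (X p') = λ Ψ (X p)`, and the two factors cancel.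
-/

section Invariance

variable {𝕜 E F : Type*} [NontriviallyNormedField 𝕜] [NormedAddCommGroup E] [NormedSpace 𝕜 E]
  [NormedAddCommGroup F] [NormedSpace 𝕜 F] {f : E → F}

theorem fderiv_add_eq_of_comp_add_right_eq {a : E} (hf : ∀ x, f (x + a) = f x) (x : E) :
    fderiv 𝕜 f (x + a) = fderiv 𝕜 f x := by
  rw [← fderiv_comp_add_right, funext hf]

theorem fderiv_eq_smul_fderiv_smul_of_comp_smul_eq {c : 𝕜} (hf : ∀ x, f (c • x) = f x) (x : E) :
    fderiv 𝕜 f x = c • fderiv 𝕜 f (c • x) := by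
  rw [← fderiv_comp_smul, funext hf]

end Invariance

theorem Psi_sq_smul {E : Type*} [NormedAddCommGroup E] [NormedSpace ℝ E]
    {t : ℝ} (ht : 0 ≤ t) (v : E) : Psi (t ^ 2 • v) = t • Psi v := by
  rcases ht.eq_or_lt with rfl | ht
  · simp [Psi]
  by_cases hv : v = 0
  · simp [hv, Psi]
  have hsqrt : Real.sqrt ‖t ^ 2 • v‖ = t * Real.sqrt ‖v‖ := by
    rw [norm_smul, Real.norm_of_nonneg (by positivity), Real.sqrt_mul (by positivity),
      Real.sqrt_sq ht.le]
  simp only [Psi, if_neg hv, smul_ne_zero (pow_ne_zero 2 ht.ne') hv, if_false, hsqrt, smul_smul]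
  congr 1
  field_simp

section PiMap

variable {n : ℕ}

theorem tauMap_add_const (q : PiLp 2 fun _ : Fin n => E3) (c : E3) :
    tauMap (q + (WithLp.equiv 2 (Fin n → E3)).symm (fun _ => c)) = tauMap q := by
  refine PiLp.ext fun i => ?_
  simp only [tauMap, PiLp.toLp_apply, PiLp.add_apply, WithLp.equiv_symm_apply]
  split_ifs
  · rfl
  · abel

theorem tauMap_smul (t : ℝ) (q : PiLp 2 fun _ : Fin n => E3) :
    tauMap (t • q) = t • tauMap q := by
  refine PiLp.ext fun i => ?_
  simp only [tauMap, PiLp.toLp_apply, PiLp.smul_apply]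
  split_ifs <;> simp [smul_sub]

theorem piMap_add_const (q : PiLp 2 fun _ : Fin n => E3) (c : E3) :
    piMap (q + (WithLp.equiv 2 (Fin n → E3)).symm (fun _ => c)) = piMap q := by
  simp only [piMap, tauMap_add_const]

theorem piMap_smul {t : ℝ} (ht : 0 < t) (q : PiLp 2 fun _ : Fin n => E3) :
    piMap (t • q) = piMap q := by
  rw [piMap, piMap, tauMap_smul, norm_smul, Real.norm_of_nonneg ht.le, smul_smul, mul_inv,
    mul_right_comm, inv_mul_cancel₀ ht.ne', one_mul]

end PiMap

theorem normalized_field_scale_translation_invariant_general (n : ℕ)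
    (X : (PiLp 2 fun _ : Fin n => E3) → PiLp 2 fun _ : Fin n => E3)
    (htrans : ∀ p (v : E3), X (p + (WithLp.equiv 2 (Fin n → E3)).symm (fun _ => v)) = X p)
    (hquad : ∀ (t : ℝ), 0 < t → ∀ p, X (t • p) = t ^ 2 • X p)
    (p : PiLp 2 fun _ : Fin n => E3)
    (lam : ℝ) (hlam : 0 < lam) (c : E3)
    (p' : PiLp 2 fun _ : Fin n => E3) (hp' : p' = lam • p + (WithLp.equiv 2 (Fin n → E3)).symm (fun _ => c)) :
    fderiv ℝ (piMap (n := n)) p' (Psi (X p')) =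
      fderiv ℝ (piMap (n := n)) p (Psi (X p)) := by
  subst hp'
  rw [htrans, hquad lam hlam, Psi_sq_smul hlam.le,
    fderiv_add_eq_of_comp_add_right_eq (piMap_add_const · c),
    fderiv_eq_smul_fderiv_smul_of_comp_smul_eq (piMap_smul hlam) p, map_smul, smul_apply]

theorem normalized_field_scale_translation_invariant (n : ℕ) (hn : 2 ≤ n)
    (X : (PiLp 2 fun _ : Fin n => E3) → PiLp 2 fun _ : Fin n => E3)
    (htrans : ∀ p (v : E3), X (p + (WithLp.equiv 2 (Fin n → E3)).symm (fun _ => v)) = X p)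
    (hquad : ∀ (t : ℝ), 0 < t → ∀ p, X (t • p) = t ^ 2 • X p)
    (p : PiLp 2 fun _ : Fin n => E3) (hp : tauMap p = p) (hpnorm : ‖p‖ = 1)
    (lam : ℝ) (hlam : 0 < lam) (c : E3)
    (p' : PiLp 2 fun _ : Fin n => E3) (hp' : p' = lam • p + (WithLp.equiv 2 (Fin n → E3)).symm (fun _ => c)) :
    fderiv ℝ (piMap (n := n)) p' (Psi (X p')) =
      fderiv ℝ (piMap (n := n)) p (Psi (X p)) :=
  normalized_field_scale_translation_invariant_general n X htrans hquad p lam hlam c p' hp'
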